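/- arXiv:2511.18253 — 5 statements merged into one kernel-verified Lean document; each statement's English description precedes it below -/
import Mathlib

section
/- Let G be a weighted directed graph with no negative cycle. Define φ(v) = d(V,v) = min_{s∈V} d(s,v). Then φ(v) is a (finite) real number for every vertex v, and φ neutralizes every edge of G: for every edge (u,v) ∈ E one has φ(u) + ℓ(u,v) − φ(v) ≥ 0. -/
/-- A weighted directed graph: a finite vertex type `V`, an edge relation, and
real-valued edge lengths. -/
structure WDigraph (V : Type*) where
  Edge : V → V → Prop
  len : V → V → ℝ

namespace WDigraph

variable {V : Type*}

/-- `p` is a walk from `s` to `t`: a nonempty list of vertices starting at `s`,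
ending at `t`, whose consecutive pairs are edges.  The one-vertex list `[s]` is
the empty walk from `s` to `s`. -/
def IsWalk (G : WDigraph V) (s t : V) (p : List V) : Prop :=
  p ≠ [] ∧ p.head? = some s ∧ p.getLast? = some t ∧ p.Chain' G.Edge

/-- The length of a walk: the sum of the lengths of its edges, counted with
multiplicity (the empty walk has length 0). -/
noncomputable def walkLen (G : WDigraph V) (p : List V) : ℝ :=
  ((p.zip p.tail).map fun q => G.len q.1 q.2).sum

/-- The number of hops of a walk: its traversals of negative edges, counted
with multiplicity. -/
noncomputable def hops (G : WDigraph V) (p : List V) : ℕ :=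
  ((p.zip p.tail).filter fun q => decide (G.len q.1 q.2 < 0)).length

/-- The distance `d(s,t)`: the infimum in `ℝ ∪ {±∞}` of the lengths of all
walks from `s` to `t` (equal to `+∞` when no walk exists). -/
noncomputable def dist (G : WDigraph V) (s t : V) : EReal :=
  sInf {x : EReal | ∃ p, G.IsWalk s t p ∧ x = (G.walkLen p : EReal)}

/-- The `h`-hop distance `d^h(s,t)`: the infimum in `ℝ ∪ {±∞}` of the lengths
of walks from `s` to `t` with at most `h` hops. -/
noncomputable def hopDist (G : WDigraph V) (h : ℕ) (s t : V) : EReal :=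
  sInf {x : EReal | ∃ p, G.IsWalk s t p ∧ G.hops p ≤ h ∧ x = (G.walkLen p : EReal)}

/-- A negative cycle: a walk of negative length from a vertex to itself. -/
def HasNegCycle (G : WDigraph V) : Prop :=
  ∃ v p, G.IsWalk v v p ∧ G.walkLen p < 0

/-- Reweighting the graph by a potential `φ`:
`ℓ_φ(u,v) = φ(u) + ℓ(u,v) − φ(v)`. -/
noncomputable def reweight (G : WDigraph V) (φ : V → ℝ) : WDigraph V :=
  ⟨G.Edge, fun u v => φ u + G.len u v - φ v⟩

/-- A potential `φ` is valid if `ℓ_φ(e) ≥ 0` for every edge `e` with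
`ℓ(e) ≥ 0`. -/
def Valid (G : WDigraph V) (φ : V → ℝ) : Prop :=
  ∀ u v, G.Edge u v → 0 ≤ G.len u v → 0 ≤ φ u + G.len u v - φ v

end WDigraph

namespace WDigraph

variable {V : Type*}

lemma walkLen_singleton (G : WDigraph V) (a : V) : G.walkLen [a] = 0 := by
  simp [walkLen]

lemma walkLen_cons_cons (G : WDigraph V) (a b : V) (l : List V) :
    G.walkLen (a :: b :: l) = G.len a b + G.walkLen (b :: l) := by
  simp [walkLen]

lemma walkLen_append_cons (G : WDigraph V) (x : V) (l₂ : List V) : ∀ l₁ : List V,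
    G.walkLen (l₁ ++ x :: l₂) = G.walkLen (l₁ ++ [x]) + G.walkLen (x :: l₂)
  | [] => by simp [walkLen_singleton]
  | [a] => by simp [walkLen_cons_cons, walkLen_singleton]
  | a :: b :: l => by
    have ih := walkLen_append_cons G x l₂ (b :: l)
    simp only [List.cons_append] at ih ⊢
    rw [walkLen_cons_cons, walkLen_cons_cons, ih]
    ring

lemma not_nodup_decomp {α : Type*} : ∀ {l : List α}, ¬ l.Nodup →
    ∃ (a : List α) (x : α) (b c : List α), l = a ++ x :: b ++ x :: c := by
  intro l
  induction l with
  | nil => intro h; simp at h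
  | cons y l ih =>
    intro h
    rw [List.nodup_cons] at h
    push_neg at h
    by_cases hy : y ∈ l
    · obtain ⟨b, c, rfl⟩ := List.append_of_mem hy
      exact ⟨[], y, b, c, rfl⟩
    · obtain ⟨a, x, b, c, rfl⟩ := ih (h hy)
      exact ⟨y :: a, x, b, c, rfl⟩

lemma exists_nodup_walk (G : WDigraph V) (hG : ¬ G.HasNegCycle) :
    ∀ (n : ℕ) (p : List V), p.length ≤ n → ∀ s t, G.IsWalk s t p →
      ∃ q, G.IsWalk s t q ∧ q.Nodup ∧ G.walkLen q ≤ G.walkLen p := by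
  intro n
  induction n with
  | zero =>
    intro p hp s t hw
    exact absurd (List.eq_nil_of_length_eq_zero (Nat.le_zero.mp hp)) hw.1
  | succ n ih =>
    intro p hp s t hw
    by_cases hnd : p.Nodup
    · exact ⟨p, hw, hnd, le_rfl⟩
    obtain ⟨a, x, b, c, rfl⟩ := not_nodup_decomp hnd
    obtain ⟨-, hhead, hlast, hch⟩ := hw
    rw [List.Chain', List.isChain_append] at hch
    obtain ⟨hc1, hcxc, hglue⟩ := hch
    have hc1' := hc1
    rw [List.isChain_append] at hc1'
    obtain ⟨hca, hcxb, hglue2⟩ := hc1'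
    -- the cycle (x :: b) ++ [x] has nonnegative length
    have hcycwalk : G.IsWalk x x ((x :: b) ++ [x]) := by
      refine ⟨by simp, by simp, ?_, ?_⟩
      · rw [List.getLast?_append_cons]; rfl
      · rw [List.Chain', List.isChain_append]
        refine ⟨hcxb, List.isChain_singleton x, fun y hy z hz => ?_⟩
        simp only [List.head?_cons, Option.mem_def, Option.some.injEq] at hz
        subst hz
        exact hglue y (by rw [List.getLast?_append_cons]; exact hy) x rfl
    have hcyc : 0 ≤ G.walkLen ((x :: b) ++ [x]) := by
      by_contra hneg
      exact hG ⟨x, (x :: b) ++ [x], hcycwalk, lt_of_not_ge hneg⟩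
    -- the shortened walk
    have hqwalk : G.IsWalk s t (a ++ x :: c) := by
      refine ⟨by simp, ?_, ?_, ?_⟩
      · cases a with
        | nil => simpa using hhead
        | cons y a' => simpa [List.head?_append_of_ne_nil] using hhead
      · rw [List.getLast?_append_cons]
        rw [List.getLast?_append_cons] at hlast
        exact hlast
      · rw [List.Chain', List.isChain_append]
        refine ⟨hca, hcxc, fun y hy z hz => ?_⟩
        simp only [List.head?_cons, Option.mem_def, Option.some.injEq] at hz
        subst hz
        exact hglue2 y hy x rfl
    -- length accounting
    have hlen : G.walkLen (a ++ x :: c) ≤ G.walkLen (a ++ x :: b ++ x :: c) := by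
      have h1 : G.walkLen (a ++ x :: b ++ x :: c) =
          G.walkLen ((a ++ x :: b) ++ [x]) + G.walkLen (x :: c) :=
        walkLen_append_cons G x c (a ++ x :: b)
      have h2 : (a ++ x :: b) ++ [x] = a ++ x :: (b ++ [x]) := by simp
      have h3 : G.walkLen ((a ++ x :: b) ++ [x]) =
          G.walkLen (a ++ [x]) + G.walkLen ((x :: b) ++ [x]) := by
        rw [h2]
        exact walkLen_append_cons G x (b ++ [x]) a
      rw [walkLen_append_cons G x c a, h1, h3]
      linarith
    have hplen : (a ++ x :: c).length ≤ n := by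
      simp only [List.length_append, List.length_cons] at hp ⊢
      omega
    obtain ⟨q, hqw, hqnd, hqle⟩ := ih (a ++ x :: c) hplen s t hqwalk
    exact ⟨q, hqw, hqnd, hqle.trans hlen⟩
end WDigraph

/-- If `G` has no negative cycle, then `φ(v) = d(V,v) = min_{s∈V} d(s,v)`
is a finite real number for every vertex `v`, and any real-valued potential `φ` equal to
these values neutralizes every edge of `G`. -/
theorem johnson_potential_neutralizes {V : Type*} [Fintype V] (G : WDigraph V)
    (hG : ¬ G.HasNegCycle) :
    (∀ v : V, ∃ r : ℝ, (⨅ s : V, G.dist s v) = (r : EReal)) ∧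
    (∀ φ : V → ℝ, (∀ v : V, (φ v : EReal) = ⨅ s : V, G.dist s v) →
      ∀ u v : V, G.Edge u v → 0 ≤ φ u + G.len u v - φ v) := by
  classical
  -- lower bound on all walk lengths of nodup walks
  obtain ⟨B, hB⟩ : ∃ B : ℝ, ∀ q : List V, q.Nodup → B ≤ G.walkLen q := by
    have hfin : (Set.range fun q : {l : List V // l.Nodup} => G.walkLen q.1).Finite :=
      Set.finite_range _
    obtain ⟨B, hB⟩ := hfin.bddBelow
    exact ⟨B, fun q hq => hB ⟨⟨q, hq⟩, rfl⟩⟩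
  have hBd : ∀ s v : V, (B : EReal) ≤ G.dist s v := by
    intro s v
    apply le_sInf
    rintro x ⟨p, hp, rfl⟩
    obtain ⟨q, hqw, hqnd, hqle⟩ := G.exists_nodup_walk hG p.length p le_rfl s v hp
    exact_mod_cast (hB q hqnd).trans hqle
  have hub : ∀ v : V, G.dist v v ≤ (0 : EReal) := by
    intro v
    have h1 : G.IsWalk v v [v] := ⟨by simp, rfl, rfl, List.isChain_singleton v⟩
    have h2 : G.dist v v ≤ ((G.walkLen [v] : ℝ) : EReal) := sInf_le ⟨[v], h1, rfl⟩
    simpa [WDigraph.walkLen_singleton] using h2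
  have hφlb : ∀ v : V, (B : EReal) ≤ ⨅ s : V, G.dist s v :=
    fun v => le_iInf fun s => hBd s v
  have hφub : ∀ v : V, (⨅ s : V, G.dist s v) ≤ (0 : EReal) :=
    fun v => (iInf_le _ v).trans (hub v)
  constructor
  · intro v
    refine ⟨(⨅ s : V, G.dist s v).toReal, (EReal.coe_toReal ?_ ?_).symm⟩
    · exact ne_top_of_le_ne_top (by simp) (hφub v)
    · exact fun h => absurd (h ▸ hφlb v) (by simp)
  · intro φ hφ u v huv
    haveI : Nonempty V := ⟨v⟩
    have key : φ v ≤ φ u + G.len u v := by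
      refine le_of_forall_pos_le_add fun ε hε => ?_
      obtain ⟨s₀, hs₀⟩ := exists_eq_ciInf_of_finite (f := fun s => G.dist s u)
      have hlt : G.dist s₀ u < ((φ u + ε : ℝ) : EReal) := by
        rw [hs₀, ← hφ u]
        exact_mod_cast (by linarith : φ u < φ u + ε)
      obtain ⟨x, ⟨p, hp, rfl⟩, hx⟩ := sInf_lt_iff.mp hlt
      have hxr : G.walkLen p < φ u + ε := by exact_mod_cast hx
      obtain ⟨p', hp'⟩ := List.getLast?_eq_some_iff.mp hp.2.2.1
      -- extend the walk by the edge (u, v)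
      have hqwalk : G.IsWalk s₀ v (p ++ [v]) := by
        refine ⟨by simp [hp.1], ?_, ?_, ?_⟩
        · rw [List.head?_append_of_ne_nil _ hp.1]; exact hp.2.1
        · rw [List.getLast?_append_cons]; rfl
        · rw [List.Chain', List.isChain_append]
          refine ⟨hp.2.2.2, List.isChain_singleton v, fun y hy z hz => ?_⟩
          simp only [List.head?_cons, Option.mem_def, Option.some.injEq] at hz
          subst hz
          have : y = u := by
            rw [Option.mem_def, hp.2.2.1, Option.some.injEq] at hy
            exact hy.symm
          rw [this]; exact huv
      have hqlen : G.walkLen (p ++ [v]) = G.walkLen p + G.len u v := by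
        subst hp'
        have h2 : (p' ++ [u]) ++ [v] = p' ++ u :: [v] := by simp
        rw [h2, WDigraph.walkLen_append_cons G u [v] p', WDigraph.walkLen_cons_cons, WDigraph.walkLen_singleton]
        ring
      have h5 : (φ v : EReal) ≤ ((G.walkLen (p ++ [v]) : ℝ) : EReal) := by
        rw [hφ v]
        exact (iInf_le _ s₀).trans (sInf_le ⟨p ++ [v], hqwalk, rfl⟩)
      have h6 : φ v ≤ G.walkLen (p ++ [v]) := by exact_mod_cast h5
      rw [hqlen] at h6
      linarith
    linarith
end

section
/- Let G be a weighted directed graph with no negative cycle, and let k be the number of negative edges of G. Then for every walk W from s to t there exists a walk W' from s to t that traverses each negative edge at most once (and hence has at most k hops) with ℓ(W') ≤ ℓ(W). Consequently, d(s,t) = d^k(s,t) for all vertices s,t. -/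
namespace WDAux

variable {V : Type*}

lemma E_split (a : List V) (x : V) (c : List V) :
    ((a ++ x :: c).zip (a ++ x :: c).tail)
      = ((a ++ [x]).zip (a ++ [x]).tail) ++ ((x :: c).zip c) := by
  induction a with
  | nil => simp
  | cons y a' ih =>
    cases a' with
    | nil => simp
    | cons z a'' => simpa using ih

lemma mem_decomp {u v : V} : ∀ {p : List V}, (u, v) ∈ p.zip p.tail →
    ∃ a c, p = a ++ u :: v :: c := by
  intro p
  induction p with
  | nil => simp
  | cons x q ih =>
    cases q with
    | nil => simp
    | cons y r =>
      intro h
      rcases List.mem_cons.1 h with h | h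
      · exact ⟨[], r, by simp_all [Prod.ext_iff]⟩
      · obtain ⟨a, c, hac⟩ := ih h
        exact ⟨x :: a, c, by simp [hac]⟩

lemma two_decomp {u v : V} [DecidableEq V] : ∀ {p : List V},
    2 ≤ (p.zip p.tail).count (u, v) →
    ∃ a m c, p = a ++ u :: (m ++ u :: v :: c) := by
  intro p
  induction p with
  | nil => simp
  | cons x q ih =>
    cases q with
    | nil => simp
    | cons y r =>
      intro h
      simp only [List.tail_cons] at h
      rw [List.zip_cons_cons, List.count_cons] at h
      by_cases hxy : (x, y) = (u, v)
      · obtain ⟨hx, hy⟩ : x = u ∧ y = v := Prod.ext_iff.1 hxy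
        have hm : (u,v) ∈ (y::r).zip ((y::r).tail) := by
          simp only [List.tail_cons]
          simp [hxy] at h
          exact h
        obtain ⟨m, c, hmc⟩ := mem_decomp hm
        exact ⟨[], m, c, by simp [hx, hmc]⟩
      · have h2 : 2 ≤ ((y::r).zip ((y::r).tail)).count (u,v) := by
          simp only [List.tail_cons]
          rw [Prod.ext_iff] at hxy
          simp [hxy] at h
          exact h
        obtain ⟨a, m, c, hac⟩ := ih h2
        exact ⟨x :: a, m, c, by simp [hac]⟩

lemma pairs_edge {R : V → V → Prop} : ∀ {p : List V}, p.Chain' R →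
    ∀ q ∈ p.zip p.tail, R q.1 q.2 := by
  intro p
  induction p with
  | nil => simp
  | cons x q ih =>
    cases q with
    | nil => simp
    | cons y r =>
      intro hc z hz
      replace hc := List.isChain_cons_cons.1 hc
      rcases List.mem_cons.1 hz with h | h
      · subst h; exact hc.1
      · exact ih hc.2 z h

lemma walkLen_split (G : WDigraph V) (a : List V) (x : V) (c : List V) :
    G.walkLen (a ++ x :: c) = G.walkLen (a ++ [x]) + G.walkLen (x :: c) := by
  unfold WDigraph.walkLen
  rw [E_split]
  simp

lemma head?_indep (a : List V) (x : V) (l l' : List V) :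
    (a ++ x :: l).head? = (a ++ x :: l').head? := by
  cases a <;> simp

lemma nodup_of_count {W : Type*} [DecidableEq W] :
    ∀ F : List (W × W), (∀ r : W × W, F.count r ≤ 1) → F.Nodup := by
  intro F
  induction F with
  | nil => simp
  | cons x l ih =>
    intro h
    rw [List.nodup_cons]
    refine ⟨fun hmem => ?_, ih fun r => ?_⟩
    · have h1 := h x
      rw [List.count_cons_self] at h1
      have h2 := List.one_le_count_iff.2 hmem
      omega
    · have h1 := h r
      rw [List.count_cons] at h1
      omega

lemma reduce [DecidableEq V] (G : WDigraph V) (hG : ¬ G.HasNegCycle) :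
    ∀ (n : ℕ) (s t : V) (p : List V), p.length ≤ n → G.IsWalk s t p →
    ∃ p', G.IsWalk s t p' ∧ G.walkLen p' ≤ G.walkLen p ∧
      ∀ u v : V, G.len u v < 0 → (p'.zip p'.tail).count (u, v) ≤ 1 := by
  intro n
  induction n with
  | zero =>
    intro s t p hl hw
    exact absurd (List.length_eq_zero_iff.1 (Nat.le_zero.1 hl)) hw.1
  | succ n ih =>
    intro s t p hl hw
    by_cases hgood : ∀ u v : V, G.len u v < 0 → (p.zip p.tail).count (u, v) ≤ 1
    · exact ⟨p, hw, le_refl _, hgood⟩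
    push_neg at hgood
    obtain ⟨u, v, hneg, hcnt⟩ := hgood
    obtain ⟨a, m, c, rfl⟩ := two_decomp hcnt
    obtain ⟨hne, hhead, hlast, hchain⟩ := hw
    -- chain facts
    have c1 : (a ++ [u]).Chain' G.Edge := hchain.prefix ⟨m ++ u :: v :: c, by simp⟩
    have c2 : (v :: c).Chain' G.Edge := hchain.suffix ⟨a ++ u :: (m ++ [u]), by simp⟩
    have c3 : (u :: v :: c).Chain' G.Edge := hchain.suffix ⟨a ++ u :: m, by simp⟩
    have cedge : G.Edge u v := (List.isChain_cons_cons.1 c3).1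
    have hchain' : (a ++ u :: v :: c).Chain' G.Edge := by
      have : ((a ++ [u]) ++ (v :: c)).Chain' G.Edge := by
        refine List.isChain_append.2 ⟨c1, c2, ?_⟩
        intro x hx y hy
        rw [List.getLast?_concat] at hx
        simp only [List.head?_cons] at hy
        obtain rfl : u = x := by injection hx
        obtain rfl : v = y := by injection hy
        exact cedge
      simpa using this
    have hhead' : (a ++ u :: v :: c).head? = some s := by
      rw [head?_indep a u (v :: c) (m ++ u :: v :: c)]; exact hhead
    have hlast' : (a ++ u :: v :: c).getLast? = some t := by
      have h1 : (a ++ u :: (m ++ u :: v :: c)).getLast? = (u :: v :: c).getLast? := by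
        rw [show a ++ u :: (m ++ u :: v :: c) = (a ++ u :: m) ++ (u :: v :: c) by simp]
        exact List.getLast?_append_of_ne_nil _ (by simp)
      rw [List.getLast?_append_of_ne_nil _ (show u :: v :: c ≠ [] by simp)]
      rw [h1] at hlast
      simpa using hlast
    have hw' : G.IsWalk s t (a ++ u :: v :: c) := ⟨by simp, hhead', hlast', hchain'⟩
    -- length decrease
    have hlen' : (a ++ u :: v :: c).length ≤ n := by
      simp only [List.length_append, List.length_cons] at hl ⊢
      omega
    -- the removed cycle
    have hcycchain : ((u :: m) ++ [u]).Chain' G.Edge := by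
      refine hchain.infix ⟨a, v :: c, by simp⟩
    have hcyc : G.IsWalk u u ((u :: m) ++ [u]) :=
      ⟨by simp, by simp, by rw [List.getLast?_concat], hcycchain⟩
    have hge : (0:ℝ) ≤ G.walkLen ((u :: m) ++ [u]) := by
      by_contra hlt
      push_neg at hlt
      exact hG ⟨u, _, hcyc, hlt⟩
    -- walkLen comparison
    have w1 : G.walkLen (a ++ u :: (m ++ u :: v :: c))
        = G.walkLen (a ++ [u]) + G.walkLen (u :: (m ++ u :: v :: c)) :=
      walkLen_split G a u (m ++ u :: v :: c)
    have w2 : G.walkLen (u :: (m ++ u :: v :: c))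
        = G.walkLen ((u :: m) ++ [u]) + G.walkLen (u :: v :: c) := by
      have := walkLen_split G (u :: m) u (v :: c)
      simpa using this
    have w3 : G.walkLen (a ++ u :: v :: c)
        = G.walkLen (a ++ [u]) + G.walkLen (u :: v :: c) :=
      walkLen_split G a u (v :: c)
    have hwl : G.walkLen (a ++ u :: v :: c) ≤ G.walkLen (a ++ u :: (m ++ u :: v :: c)) := by
      rw [w1, w2, w3]; linarith
    obtain ⟨p'', hw'', hwl'', hcnt''⟩ := ih s t (a ++ u :: v :: c) hlen' hw'
    exact ⟨p'', hw'', le_trans hwl'' hwl, hcnt''⟩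

end WDAux

/-- If `G` has no negative cycle and has `k` negative edges, then
every walk from `s` to `t` can be replaced by a walk from `s` to `t`, of no greater
length, traversing each negative edge at most once (hence with at most `k` hops).
Consequently `d(s,t) = d^k(s,t)` for all vertices `s,t`. -/
theorem dist_eq_hopDist_card_negEdges {V : Type*} [Fintype V] [DecidableEq V]
    (G : WDigraph V) (hG : ¬ G.HasNegCycle) (k : ℕ)
    (hk : {e : V × V | G.Edge e.1 e.2 ∧ G.len e.1 e.2 < 0}.ncard = k) :
    (∀ (s t : V) (p : List V), G.IsWalk s t p →
      ∃ p' : List V, G.IsWalk s t p' ∧ G.walkLen p' ≤ G.walkLen p ∧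
        (∀ u v : V, G.Edge u v → G.len u v < 0 → (p'.zip p'.tail).count (u, v) ≤ 1) ∧
        G.hops p' ≤ k) ∧
    (∀ s t : V, G.dist s t = G.hopDist k s t) := by
  have main : ∀ (s t : V) (p : List V), G.IsWalk s t p →
      ∃ p' : List V, G.IsWalk s t p' ∧ G.walkLen p' ≤ G.walkLen p ∧
        (∀ u v : V, G.len u v < 0 → (p'.zip p'.tail).count (u, v) ≤ 1) ∧
        G.hops p' ≤ k := by
    intro s t p hw
    obtain ⟨p', hw', hwl', hcnt'⟩ := WDAux.reduce G hG p.length s t p le_rfl hw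
    refine ⟨p', hw', hwl', hcnt', ?_⟩
    -- bound hops
    set F := (p'.zip p'.tail).filter (fun q => decide (G.len q.1 q.2 < 0)) with hF
    have hFnodup : F.Nodup := by
      refine WDAux.nodup_of_count F fun q => ?_
      by_cases hq : G.len q.1 q.2 < 0
      · calc F.count q ≤ (p'.zip p'.tail).count q := List.filter_sublist.count_le q
          _ ≤ 1 := by simpa using hcnt' q.1 q.2 hq
      · have hnm : q ∉ F := by
          intro hmem
          rw [hF, List.mem_filter] at hmem
          exact hq (by simpa using hmem.2)
        rw [List.count_eq_zero.2 hnm]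
        omega
    have hsub : (↑F.toFinset : Set (V × V)) ⊆ {e : V × V | G.Edge e.1 e.2 ∧ G.len e.1 e.2 < 0} := by
      intro q hq
      simp only [Finset.mem_coe, List.mem_toFinset] at hq
      rw [hF, List.mem_filter] at hq
      exact ⟨WDAux.pairs_edge hw'.2.2.2 q hq.1, by simpa using hq.2⟩
    have hcard : F.toFinset.card ≤ k := by
      rw [← hk, ← Set.ncard_coe_finset]
      exact Set.ncard_le_ncard hsub (Set.toFinite _)
    have : G.hops p' = F.length := rfl
    rw [this, ← List.toFinset_card_of_nodup hFnodup]
    exact hcard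
  refine ⟨fun s t p hw => ?_, fun s t => ?_⟩
  · obtain ⟨p', h1, h2, h3, h4⟩ := main s t p hw
    exact ⟨p', h1, h2, fun u v _ hneg => h3 u v hneg, h4⟩
  · apply le_antisymm
    · apply sInf_le_sInf
      rintro x ⟨p, hw, -, hx⟩
      exact ⟨p, hw, hx⟩
    · apply le_sInf
      rintro x ⟨p, hw, rfl⟩
      obtain ⟨p', h1, h2, -, h4⟩ := main s t p hw
      calc G.hopDist k s t ≤ (G.walkLen p' : EReal) := sInf_le ⟨p', h1, h4, rfl⟩
        _ ≤ (G.walkLen p : EReal) := by exact_mod_cast h2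
end

section
/- Let G be a weighted directed graph and U ⊆ V a set of vertices such that the tail of every negative edge of G lies in U. Let h ∈ ℕ and let (y,z) ∈ E be an edge with ℓ(y,z) ≥ 0. If d^h(V,y) + ℓ(y,z) < 0, then some u ∈ U h-hop negatively reaches z, i.e., there is an h-hop walk from u to z of negative length. -/
section Aux

variable {V : Type*} (G : WDigraph V)

lemma walkLen_single (a : V) : G.walkLen [a] = 0 := by
  simp [WDigraph.walkLen]

lemma walkLen_cons_cons (a b : V) (l : List V) :
    G.walkLen (a :: b :: l) = G.len a b + G.walkLen (b :: l) := by
  simp [WDigraph.walkLen]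

lemma hops_single (a : V) : G.hops [a] = 0 := by
  simp [WDigraph.hops]

lemma hops_cons_cons (a b : V) (l : List V) :
    G.hops (a :: b :: l) = (if G.len a b < 0 then 1 else 0) + G.hops (b :: l) := by
  by_cases hab : G.len a b < 0 <;>
    simp [WDigraph.hops, List.zip, List.filter, hab] <;> omega

lemma walkLen_concat : ∀ (p : List V) (y z : V), p.getLast? = some y →
    G.walkLen (p ++ [z]) = G.walkLen p + G.len y z := by
  intro p
  induction p with
  | nil => intro y z hy; simp at hy
  | cons a l ih =>
    intro y z hy
    cases l with
    | nil =>
      simp at hy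
      subst hy
      simp [walkLen_cons_cons, walkLen_single]
    | cons b l' =>
      have hy' : (b :: l').getLast? = some y := by
        simpa [List.getLast?_cons_cons] using hy
      have := ih y z hy'
      simp only [List.cons_append, walkLen_cons_cons] at *
      rw [this]; ring

lemma hops_concat : ∀ (p : List V) (y z : V), p.getLast? = some y →
    G.hops (p ++ [z]) = G.hops p + (if G.len y z < 0 then 1 else 0) := by
  intro p
  induction p with
  | nil => intro y z hy; simp at hy
  | cons a l ih =>
    intro y z hy
    cases l with
    | nil =>
      simp at hy
      subst hy
      simp [hops_cons_cons, hops_single]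
    | cons b l' =>
      have hy' : (b :: l').getLast? = some y := by
        simpa [List.getLast?_cons_cons] using hy
      have := ih y z hy'
      simp only [List.cons_append, hops_cons_cons] at *
      rw [this]; ring

lemma isWalk_concat {s y z : V} {p : List V} (hw : G.IsWalk s y p) (he : G.Edge y z) :
    G.IsWalk s z (p ++ [z]) := by
  obtain ⟨hne, hh, hl, hc⟩ := hw
  refine ⟨by simp, ?_, ?_, ?_⟩
  · cases p with
    | nil => exact absurd rfl hne
    | cons a l => simpa using hh
  · simp
  · show List.IsChain G.Edge (p ++ [z]); rw [List.isChain_append]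
    refine ⟨hc, List.isChain_singleton z, ?_⟩
    intro x hx w hw
    simp at hw
    subst hw
    rw [hl] at hx
    simp at hx
    subst hx
    exact he

lemma exists_u_of_neg_walk (U : Set V)
    (hU : ∀ u v : V, G.Edge u v → G.len u v < 0 → u ∈ U) (h : ℕ) :
    ∀ (p : List V) (s t : V), G.IsWalk s t p → G.hops p ≤ h → G.walkLen p < 0 →
    ∃ u ∈ U, ∃ q, G.IsWalk u t q ∧ G.hops q ≤ h ∧ G.walkLen q < 0 := by
  intro p
  induction p with
  | nil => intro s t hw; exact absurd rfl hw.1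
  | cons a l ih =>
    intro s t hw hhops hlen
    obtain ⟨hne, hh, hl, hc⟩ := hw
    cases l with
    | nil =>
      rw [walkLen_single] at hlen
      linarith
    | cons b l' =>
      by_cases hab : G.len a b < 0
      · refine ⟨a, hU a b (List.isChain_cons_cons.mp hc).1 hab, a :: b :: l',
          ⟨by simp, rfl, hl, hc⟩, hhops, hlen⟩
      · have hw' : G.IsWalk b t (b :: l') :=
          ⟨by simp, rfl, by simpa [List.getLast?_cons_cons] using hl,
            (List.isChain_cons_cons.mp hc).2⟩
        have h1 : G.hops (b :: l') ≤ h := by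
          rw [hops_cons_cons] at hhops
          omega
        have h2 : G.walkLen (b :: l') < 0 := by
          rw [walkLen_cons_cons] at hlen
          push_neg at hab
          linarith
        exact ih b t hw' h1 h2

end Aux

/-- Suppose the tail of every negative edge lies in `U`.  If
`(y,z)` is an edge with `ℓ(y,z) ≥ 0` and `d^h(V,y) + ℓ(y,z) < 0`, then some
`u ∈ U` `h`-hop negatively reaches `z`: there is an `h`-hop walk from `u` to `z`
of negative length. -/
theorem negative_reach_through_nonneg_edge {V : Type*} [Fintype V] (G : WDigraph V)
    (U : Set V) (hU : ∀ u v : V, G.Edge u v → G.len u v < 0 → u ∈ U)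
    (h : ℕ) (y z : V) (hyz : G.Edge y z) (hℓ : 0 ≤ G.len y z)
    (hneg : (⨅ s : V, G.hopDist h s y) + (G.len y z : EReal) < 0) :
    ∃ u ∈ U, ∃ p : List V, G.IsWalk u z p ∧ G.hops p ≤ h ∧ G.walkLen p < 0 := by
  have h1 : (⨅ s : V, G.hopDist h s y) < ((-(G.len y z) : ℝ) : EReal) := by
    by_contra hc
    push_neg at hc
    have h2 := add_le_add_left hc (G.len y z : EReal)
    have h0 : ((-(G.len y z) : ℝ) : EReal) + (G.len y z : EReal) = 0 := by
      rw [← EReal.coe_add]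
      norm_num
    rw [h0] at h2
    exact hneg.not_ge h2
  obtain ⟨s, hs⟩ := iInf_lt_iff.mp h1
  rw [WDigraph.hopDist] at hs
  obtain ⟨x, hx, hxlt⟩ := sInf_lt_iff.mp hs
  obtain ⟨p, hwalk, hhops, rfl⟩ := hx
  have hlen : G.walkLen p < -(G.len y z) := EReal.coe_lt_coe_iff.mp hxlt
  -- append z
  have hlast : p.getLast? = some y := hwalk.2.2.1
  have hw2 : G.IsWalk s z (p ++ [z]) := isWalk_concat G hwalk hyz
  have hL : G.walkLen (p ++ [z]) = G.walkLen p + G.len y z :=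
    walkLen_concat G p y z hlast
  have hH : G.hops (p ++ [z]) ≤ h := by
    rw [hops_concat G p y z hlast, if_neg (not_lt.2 hℓ)]
    omega
  exact exists_u_of_neg_walk G U hU h (p ++ [z]) s z hw2 hH (by rw [hL]; linarith)
end

section
/- Let G be a weighted directed graph with no negative cycle and let h ∈ ℕ. Let W be a walk from u to v with at most h hops that visits a vertex x. Then max( d^h(u,x), d^h(V,x) ) + max( d^h(x,v), d^{2h}(V,v) − d^h(V,x) ) ≤ ℓ(W), where all hop distances appearing are finite real numbers. -/
namespace WDigraph

variable {V : Type*}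

def edges : List V → List (V × V)
  | [] => []
  | [_] => []
  | a :: b :: l => (a, b) :: edges (b :: l)

lemma edges_eq_zip : ∀ p : List V, edges p = p.zip p.tail
  | [] => rfl
  | [_] => rfl
  | a :: b :: l => by
      rw [edges, edges_eq_zip (b :: l), List.tail_cons, List.tail_cons, List.zip_cons_cons]

lemma walkLen_eq (G : WDigraph V) (p : List V) :
    G.walkLen p = ((edges p).map fun q => G.len q.1 q.2).sum := by
  rw [walkLen, edges_eq_zip]

lemma hops_eq (G : WDigraph V) (p : List V) :
    G.hops p = ((edges p).filter fun q => decide (G.len q.1 q.2 < 0)).length := by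
  rw [hops, edges_eq_zip]

lemma edges_append : ∀ (a : List V) (x : V) (b : List V),
    edges (a ++ x :: b) = edges (a ++ [x]) ++ edges (x :: b)
  | [], x, b => by simp [edges]
  | [y], x, b => by simp [edges]
  | y :: z :: a, x, b => by
      have := edges_append (z :: a) x b
      simp only [List.cons_append, List.append_eq, edges] at this ⊢
      rw [this]

lemma chain'_iff_edges {R : V → V → Prop} :
    ∀ p : List V, List.Chain' R p ↔ ∀ e ∈ edges p, R e.1 e.2
  | [] => by simp [edges, List.Chain', List.isChain_nil]
  | [_] => by simp [edges, List.Chain', List.isChain_singleton]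
  | a :: b :: l => by
      have ih := chain'_iff_edges (R := R) (b :: l)
      simp only [List.Chain'] at ih ⊢
      rw [List.isChain_cons_cons, edges, ih]
      simp

lemma fst_mem_of_mem_edges : ∀ {p : List V} {e : V × V}, e ∈ edges p → e.1 ∈ p
  | [], e => by simp [edges]
  | [_], e => by simp [edges]
  | a :: b :: l, e => by
      rw [edges]
      intro hm
      rcases List.mem_cons.1 hm with h | h
      · simp [h]
      · exact List.mem_cons_of_mem _ (fst_mem_of_mem_edges h)

lemma edges_nodup : ∀ {p : List V}, p.Nodup → (edges p).Nodup
  | [] , _ => by simp [edges]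
  | [_], _ => by simp [edges]
  | a :: b :: l, h => by
      rw [edges, List.nodup_cons]
      refine ⟨fun hc => ?_, edges_nodup (List.nodup_cons.1 h).2⟩
      exact (List.nodup_cons.1 h).1 (fst_mem_of_mem_edges hc)

lemma walkLen_split (G : WDigraph V) (a : List V) (x : V) (b : List V) :
    G.walkLen (a ++ x :: b) = G.walkLen (a ++ [x]) + G.walkLen (x :: b) := by
  rw [walkLen_eq, edges_append, List.map_append, List.sum_append, ← walkLen_eq, ← walkLen_eq]

lemma hops_split (G : WDigraph V) (a : List V) (x : V) (b : List V) :
    G.hops (a ++ x :: b) = G.hops (a ++ [x]) + G.hops (x :: b) := by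
  rw [hops_eq, edges_append, List.filter_append, List.length_append, ← hops_eq, ← hops_eq]

lemma head?_split (a : List V) (x : V) (b : List V) :
    (a ++ x :: b).head? = (a ++ [x]).head? := by
  cases a <;> simp

lemma isWalk_concat {G : WDigraph V} {s x t : V} {a b : List V}
    (h1 : G.IsWalk s x (a ++ [x])) (h2 : G.IsWalk x t (x :: b)) :
    G.IsWalk s t (a ++ x :: b) := by
  obtain ⟨-, hh1, hl1, hc1⟩ := h1
  obtain ⟨-, hh2, hl2, hc2⟩ := h2
  refine ⟨by simp, ?_, ?_, ?_⟩
  · rw [head?_split]; exact hh1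
  · rw [List.getLast?_append_cons]; exact hl2
  · rw [chain'_iff_edges] at hc1 hc2 ⊢
    intro e he
    rw [edges_append] at he
    rcases List.mem_append.1 he with h | h
    · exact hc1 e h
    · exact hc2 e h

lemma isWalk_split {G : WDigraph V} {s t : V} {a b : List V} {x : V}
    (hW : G.IsWalk s t (a ++ x :: b)) :
    G.IsWalk s x (a ++ [x]) ∧ G.IsWalk x t (x :: b) := by
  obtain ⟨-, hh, hl, hc⟩ := hW
  rw [chain'_iff_edges] at hc
  constructor
  · refine ⟨by simp, ?_, List.getLast?_concat, ?_⟩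
    · rw [← head?_split]; exact hh
    · rw [chain'_iff_edges]
      intro e he
      exact hc e (by rw [edges_append]; exact List.mem_append.2 (Or.inl he))
  · refine ⟨by simp, rfl, ?_, ?_⟩
    · rw [List.getLast?_append_cons] at hl; exact hl
    · rw [chain'_iff_edges]
      intro e he
      exact hc e (by rw [edges_append]; exact List.mem_append.2 (Or.inr he))

end WDigraph

namespace WDigraph
variable {V : Type*}

lemma exists_dup_split : ∀ {p : List V}, ¬ p.Nodup →
    ∃ (a : List V) (y : V) (b c : List V), p = a ++ y :: (b ++ y :: c) := by
  intro p
  induction p with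
  | nil => intro hc; exact absurd List.nodup_nil hc
  | cons z q ih =>
    intro hc
    by_cases hz : z ∈ q
    · obtain ⟨b, c, rfl⟩ := List.append_of_mem hz
      exact ⟨[], z, b, c, rfl⟩
    · have : ¬ q.Nodup := fun hn => hc (List.nodup_cons.2 ⟨hz, hn⟩)
      obtain ⟨a, y, b, c, rfl⟩ := ih this
      exact ⟨z :: a, y, b, c, rfl⟩

lemma neg_sum_map {α : Type*} (f : α → ℝ) : ∀ l : List α,
    (l.map fun x => -f x).sum = -((l.map f).sum)
  | [] => by simp
  | a :: l => by simp [neg_sum_map f l]; ring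

lemma exists_real_of_bounds {x : EReal} {a b : ℝ} (h1 : (a : EReal) ≤ x)
    (h2 : x ≤ (b : EReal)) : ∃ r : ℝ, x = (r : EReal) := by
  induction x using EReal.rec with
  | bot => exact absurd h1 (by simp)
  | coe r => exact ⟨r, rfl⟩
  | top => exact absurd h2 (by simp)

/-- remove one cycle -/
lemma remove_cycle {G : WDigraph V} (hG : ¬ G.HasNegCycle) {s t : V}
    {a : List V} {y : V} {b c : List V}
    (hW : G.IsWalk s t (a ++ y :: (b ++ y :: c))) :
    G.IsWalk s t (a ++ y :: c) ∧ G.walkLen (a ++ y :: c) ≤ G.walkLen (a ++ y :: (b ++ y :: c)) := by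
  obtain ⟨h1, h2⟩ := isWalk_split hW
  have h2' : G.IsWalk y t ((y :: b) ++ y :: c) := by rwa [List.cons_append]
  obtain ⟨h3, h4⟩ := isWalk_split h2'
  have hcyc : 0 ≤ G.walkLen ((y :: b) ++ [y]) := by
    by_contra hneg
    exact hG ⟨y, (y :: b) ++ [y], h3, lt_of_not_ge hneg⟩
  constructor
  · exact isWalk_concat h1 h4
  · have e1 : G.walkLen (a ++ y :: (b ++ y :: c)) =
        G.walkLen (a ++ [y]) + G.walkLen (y :: (b ++ y :: c)) := walkLen_split G a y _
    have e2 : G.walkLen ((y :: b) ++ y :: c) =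
        G.walkLen ((y :: b) ++ [y]) + G.walkLen (y :: c) := walkLen_split G (y :: b) y c
    have e2' : G.walkLen (y :: (b ++ y :: c)) = G.walkLen ((y :: b) ++ y :: c) := by
      rw [List.cons_append]
    have e3 : G.walkLen (a ++ y :: c) =
        G.walkLen (a ++ [y]) + G.walkLen (y :: c) := walkLen_split G a y c
    linarith

noncomputable def lenBound (G : WDigraph V) [Fintype V] : ℝ :=
  ∑ q : V × V, |G.len q.1 q.2|

lemma walkLen_lb [Fintype V] (G : WDigraph V) (hG : ¬ G.HasNegCycle) :
    ∀ (n : ℕ) (p : List V) (s t : V), p.length ≤ n → G.IsWalk s t p →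
      -G.lenBound ≤ G.walkLen p := by
  intro n
  induction n with
  | zero =>
    intro p s t hlen hW
    rcases p with _ | ⟨z, q⟩
    · exact absurd rfl hW.1
    · simp at hlen
  | succ n ih =>
    intro p s t hlen hW
    by_cases hnd : p.Nodup
    · -- bound directly
      classical
      have hed : (edges p).Nodup := edges_nodup hnd
      have key : ((edges p).map fun e => |G.len e.1 e.2|).sum ≤ G.lenBound := by
        rw [← List.sum_toFinset _ hed]
        apply Finset.sum_le_sum_of_subset_of_nonneg (Finset.subset_univ _)
        intro i _ _
        exact abs_nonneg _
      have h2 : ((edges p).map fun e => -|G.len e.1 e.2|).sum ≤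
          ((edges p).map fun e => G.len e.1 e.2).sum := by
        apply List.sum_le_sum
        intro i _
        exact neg_abs_le _
      rw [walkLen_eq]
      have := neg_sum_map (fun e : V × V => |G.len e.1 e.2|) (edges p)
      linarith [key, h2, this]
    · obtain ⟨a, y, b, c, rfl⟩ := exists_dup_split hnd
      obtain ⟨hW', hle⟩ := remove_cycle hG hW
      have hlen' : (a ++ y :: c).length ≤ n := by
        simp only [List.length_append, List.length_cons] at hlen ⊢
        omega
      exact le_trans (ih _ s t hlen' hW') hle

lemma hopDist_le {G : WDigraph V} {s t : V} {q : List V} {h : ℕ}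
    (hq : G.IsWalk s t q) (hh : G.hops q ≤ h) :
    G.hopDist h s t ≤ (G.walkLen q : EReal) :=
  sInf_le ⟨q, hq, hh, rfl⟩

lemma lb_hopDist [Fintype V] {G : WDigraph V} (hG : ¬ G.HasNegCycle) (h : ℕ) (s t : V) :
    ((-G.lenBound : ℝ) : EReal) ≤ G.hopDist h s t := by
  apply le_sInf
  rintro _ ⟨q, hq, -, rfl⟩
  exact_mod_cast EReal.coe_le_coe_iff.2 (walkLen_lb G hG q.length q s t le_rfl hq)

lemma isWalk_single (G : WDigraph V) (s : V) : G.IsWalk s s [s] :=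
  ⟨by simp, rfl, rfl, List.isChain_singleton _⟩

lemma walkLen_single (G : WDigraph V) (s : V) : G.walkLen [s] = 0 := by
  simp [walkLen]

lemma hops_single (G : WDigraph V) (s : V) : G.hops [s] = 0 := by
  simp [hops]

lemma hopDist_self_le_zero (G : WDigraph V) (h : ℕ) (s : V) :
    G.hopDist h s s ≤ (0 : EReal) := by
  have := hopDist_le (G := G) (h := h) (isWalk_single G s) (by simp [hops_single])
  rwa [walkLen_single] at this

end WDigraph

namespace WDigraph

lemma coe_max' (a b : ℝ) : ((max a b : ℝ) : EReal) = max (a : EReal) (b : EReal) := by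
  rcases le_total a b with h | h <;>
    simp [max_eq_left, max_eq_right, h, EReal.coe_le_coe_iff]

end WDigraph

/-- Let `G` have no negative cycle, and let `W` be a walk from `u`
to `v` with at most `h` hops visiting a vertex `x`.  Then all of `d^h(u,x)`,
`d^h(V,x)`, `d^h(x,v)`, `d^{2h}(V,v)` are finite real numbers, and
`max(d^h(u,x), d^h(V,x)) + max(d^h(x,v), d^{2h}(V,v) − d^h(V,x)) ≤ ℓ(W)`. -/
theorem distance_estimate_bound {V : Type*} [Fintype V] (G : WDigraph V)
    (hG : ¬ G.HasNegCycle) (h : ℕ) (u v x : V) (p : List V)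
    (hW : G.IsWalk u v p) (hhop : G.hops p ≤ h) (hx : x ∈ p) :
    (∃ r : ℝ, G.hopDist h u x = (r : EReal)) ∧
    (∃ r : ℝ, (⨅ s : V, G.hopDist h s x) = (r : EReal)) ∧
    (∃ r : ℝ, G.hopDist h x v = (r : EReal)) ∧
    (∃ r : ℝ, (⨅ s : V, G.hopDist (2 * h) s v) = (r : EReal)) ∧
    max (G.hopDist h u x) (⨅ s : V, G.hopDist h s x) +
        max (G.hopDist h x v)
          ((⨅ s : V, G.hopDist (2 * h) s v) - ⨅ s : V, G.hopDist h s x) ≤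
      (G.walkLen p : EReal) := by
  classical
  have : Nonempty V := ⟨u⟩
  obtain ⟨a, b, rfl⟩ := List.append_of_mem hx
  obtain ⟨hW1, hW2⟩ := WDigraph.isWalk_split hW
  have hsplitL := G.walkLen_split a x b
  have hsplitH := G.hops_split a x b
  have hh1 : G.hops (a ++ [x]) ≤ h := by omega
  have hh2 : G.hops (x :: b) ≤ h := by omega
  -- the four quantities are real
  have hA_ub : G.hopDist h u x ≤ (G.walkLen (a ++ [x]) : EReal) :=
    WDigraph.hopDist_le hW1 hh1
  obtain ⟨r1, hr1⟩ := WDigraph.exists_real_of_bounds (WDigraph.lb_hopDist hG h u x) hA_ub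
  have hB_lb : ((-G.lenBound : ℝ) : EReal) ≤ ⨅ s, G.hopDist h s x :=
    le_iInf fun s => WDigraph.lb_hopDist hG h s x
  have hB_ub : (⨅ s, G.hopDist h s x) ≤ ((0 : ℝ) : EReal) := by
    refine le_trans (iInf_le _ x) ?_
    simpa using G.hopDist_self_le_zero h x
  obtain ⟨r2, hr2⟩ := WDigraph.exists_real_of_bounds hB_lb hB_ub
  have hC_ub : G.hopDist h x v ≤ (G.walkLen (x :: b) : EReal) :=
    WDigraph.hopDist_le hW2 hh2
  obtain ⟨r3, hr3⟩ := WDigraph.exists_real_of_bounds (WDigraph.lb_hopDist hG h x v) hC_ub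
  have hD_lb : ((-G.lenBound : ℝ) : EReal) ≤ ⨅ s, G.hopDist (2 * h) s v :=
    le_iInf fun s => WDigraph.lb_hopDist hG _ s v
  have hD_ub : (⨅ s, G.hopDist (2 * h) s v) ≤ ((0 : ℝ) : EReal) := by
    refine le_trans (iInf_le _ v) ?_
    simpa using G.hopDist_self_le_zero (2 * h) v
  obtain ⟨r4, hr4⟩ := WDigraph.exists_real_of_bounds hD_lb hD_ub
  refine ⟨⟨r1, hr1⟩, ⟨r2, hr2⟩, ⟨r3, hr3⟩, ⟨r4, hr4⟩, ?_⟩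
  -- real inequalities
  have hBA : r2 ≤ r1 := by
    have h0 : (⨅ s, G.hopDist h s x) ≤ G.hopDist h u x := iInf_le _ u
    rw [hr1, hr2] at h0
    exact_mod_cast h0
  have hAub : r1 ≤ G.walkLen (a ++ [x]) := by
    rw [hr1] at hA_ub; exact_mod_cast hA_ub
  have hCub : r3 ≤ G.walkLen (x :: b) := by
    rw [hr3] at hC_ub; exact_mod_cast hC_ub
  -- attain the infimum B
  obtain ⟨s₀, hs₀⟩ := Finite.exists_min (fun s => G.hopDist h s x)
  have hBs : G.hopDist h s₀ x = (r2 : EReal) := by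
    rw [← hr2]
    exact le_antisymm (le_iInf hs₀) (iInf_le _ s₀)
  -- key inequality : r4 ≤ r2 + walkLen (x :: b)
  have hkey : r4 ≤ r2 + G.walkLen (x :: b) := by
    have hle : ((r4 - G.walkLen (x :: b) : ℝ) : EReal) ≤ G.hopDist h s₀ x := by
      apply le_sInf
      rintro _ ⟨q, hq, hqh, rfl⟩
      have hqne : q ≠ [] := hq.1
      have hlastx : q.getLast hqne = x := by
        have := hq.2.2.1
        rw [List.getLast?_eq_getLast hqne] at this
        exact Option.some.inj this
      have hq' : q = q.dropLast ++ [x] := by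
        conv_lhs => rw [← List.dropLast_append_getLast hqne]
        rw [hlastx]
      have hq2 : G.IsWalk s₀ x (q.dropLast ++ [x]) := by rw [← hq']; exact hq
      have hqh2 : G.hops (q.dropLast ++ [x]) ≤ h := by rw [← hq']; exact hqh
      have hcat : G.IsWalk s₀ v (q.dropLast ++ x :: b) := WDigraph.isWalk_concat hq2 hW2
      have hlen : G.walkLen (q.dropLast ++ x :: b) =
          G.walkLen (q.dropLast ++ [x]) + G.walkLen (x :: b) := G.walkLen_split _ x b
      have hhops : G.hops (q.dropLast ++ x :: b) ≤ 2 * h := by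
        rw [G.hops_split] ; omega
      have hDle : (⨅ s, G.hopDist (2 * h) s v) ≤ (G.walkLen (q.dropLast ++ x :: b) : EReal) :=
        le_trans (iInf_le _ s₀) (WDigraph.hopDist_le hcat hhops)
      rw [hr4, hlen] at hDle
      have hrr : r4 ≤ G.walkLen (q.dropLast ++ [x]) + G.walkLen (x :: b) := by
        exact_mod_cast hDle
      have hwq : G.walkLen q = G.walkLen (q.dropLast ++ [x]) := by rw [← hq']
      rw [hwq]
      exact EReal.coe_le_coe_iff.2 (by linarith)
    rw [hBs] at hle
    have := EReal.coe_le_coe_iff.1 hle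
    linarith
  -- conclude
  rw [hr1, hr2, hr3, hr4, hsplitL, ← EReal.coe_sub, ← WDigraph.coe_max',
    ← WDigraph.coe_max', ← EReal.coe_add, EReal.coe_le_coe_iff]
  rw [max_eq_left hBA]
  have hm : max r3 (r4 - r2) ≤ G.walkLen (x :: b) := max_le hCub (by linarith)
  linarith
end

section
/- Let G be a weighted directed graph, h ≥ 1, U₀ ⊆ V a set of vertices, and W a walk from s to t with hops e₁, …, e_r (listed in order of traversal). Suppose that for every index i with 0 ≤ i ≤ r − h, at least one of the edges e_{i+1}, …, e_{i+h} has its tail in U₀. Then W decomposes into consecutive subwalks W₁ : s → u₁, W₂ : u₁ → u₂, …, W_{ℓ+1} : u_ℓ → t for some ℓ ≥ 0 and vertices u₁, …, u_ℓ ∈ U₀, such that each subwalk W_j has at most h hops and the concatenation of W₁, …, W_{ℓ+1} is W. -/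
namespace WDigraph

/-- The hops (negative edges) of a walk, in the order they are traversed. -/
noncomputable def negHops {V : Type*} (G : WDigraph V) (p : List V) : List (V × V) :=
  (p.zip p.tail).filter fun q => decide (G.len q.1 q.2 < 0)

end WDigraph

/-- Concatenation of consecutive subwalks sharing endpoints: each walk ends at the
vertex at which the next one starts, which is listed only once in the result. -/
def joinWalks {V : Type*} : List (List V) → List V
  | [] => []
  | [w] => w
  | w :: w' :: ws => w.dropLast ++ joinWalks (w' :: ws)


section Aux

variable {α : Type*}

lemma zipTail_take : ∀ (p : List α) (n : ℕ),
    (p.take (n+1)).zip (p.take (n+1)).tail = (p.zip p.tail).take n := by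
  intro p
  induction p with
  | nil => intro n; simp
  | cons a q ih =>
    intro n
    cases q with
    | nil => simp
    | cons b q' =>
      cases n with
      | zero => simp
      | succ m =>
        have hm := ih m
        cases q' with
        | nil => simp
        | cons c q'' =>
          simp only [List.take_succ_cons, List.tail_cons, List.zip_cons_cons] at hm ⊢
          rw [← hm]

lemma zipTail_drop : ∀ (n : ℕ) (p : List α),
    (p.drop n).zip (p.drop n).tail = (p.zip p.tail).drop n := by
  intro n
  induction n with
  | zero => intro p; simp
  | succ m ih =>
    intro p
    cases p with
    | nil => simp
    | cons a q =>
      cases q with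
      | nil => simp
      | cons b q' =>
        simp only [List.drop_succ_cons, List.tail_cons, List.zip_cons_cons]
        exact ih (b :: q')

lemma filter_get_split (pr : α → Bool) :
    ∀ (l : List α) (k : ℕ) (hk : k < (l.filter pr).length),
    ∃ pos : ℕ, ∃ hpos : pos < l.length,
      l[pos] = (l.filter pr)[k] ∧ ((l.take pos).filter pr).length = k := by
  intro l
  induction l with
  | nil => simp
  | cons a q ih =>
    intro k hk
    by_cases hpa : pr a
    · cases k with
      | zero => exact ⟨0, by simp, by simp [List.filter_cons, hpa], by simp⟩
      | succ k' =>
        have hk' : k' < (q.filter pr).length := by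
          simp [List.filter_cons, hpa] at hk; omega
        obtain ⟨pos, hpos, h1, h2⟩ := ih k' hk'
        exact ⟨pos+1, Nat.succ_lt_succ hpos,
          by simpa [List.filter_cons, hpa] using h1,
          by simp [List.filter_cons, hpa, h2]⟩
    · have hk' : k < (q.filter pr).length := by
        simpa [List.filter_cons, hpa] using hk
      obtain ⟨pos, hpos, h1, h2⟩ := ih k hk'
      exact ⟨pos+1, Nat.succ_lt_succ hpos,
        by simpa [List.filter_cons, hpa] using h1,
        by simp [List.filter_cons, hpa, h2]⟩

lemma head?_take_succ (p : List α) (n : ℕ) : (p.take (n+1)).head? = p.head? := by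
  cases p <;> simp

lemma getLast?_take_succ (p : List α) (n : ℕ) (h : n < p.length) :
    (p.take (n+1)).getLast? = some p[n] := by
  have h1 : (p.take (n+1)).length = n+1 := by rw [List.length_take]; omega
  rw [List.getLast?_eq_getElem?, h1]
  simp only [Nat.add_sub_cancel]
  rw [List.getElem?_take_of_lt (by omega), List.getElem?_eq_getElem h]

lemma getLast?_drop' (p : List α) (n : ℕ) (h : n < p.length) :
    (p.drop n).getLast? = p.getLast? := by
  rw [List.getLast?_eq_getElem?, List.getLast?_eq_getElem?, List.length_drop,
    List.getElem?_drop]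
  congr 1
  omega

end Aux

theorem walk_decomposition_aux {V : Type*} (G : WDigraph V) (h : ℕ) (hh : 1 ≤ h)
    (U₀ : Set V) :
    ∀ (n : ℕ) (s t : V) (p : List V), p.length ≤ n → G.IsWalk s t p →
    (∀ i : ℕ, ∀ hi : i + h ≤ (G.negHops p).length,
      ∃ j : ℕ, ∃ hj : j < h, ((G.negHops p).get ⟨i + j, Nat.lt_of_lt_of_le (Nat.add_lt_add_left hj i) hi⟩).1 ∈ U₀) →
    ∃ ws : List (List V),
      ws ≠ [] ∧
      joinWalks ws = p ∧
      (∀ w ∈ ws, ∃ a b : V, G.IsWalk a b w ∧ G.hops w ≤ h) ∧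
      ws.Chain' (fun w w' => ∃ u ∈ U₀, w.getLast? = some u ∧ w'.head? = some u) ∧
      (∃ w₀ ∈ ws.head?, w₀.head? = some s) ∧
      (∃ wl ∈ ws.getLast?, wl.getLast? = some t) := by
  intro n
  induction n with
  | zero =>
    intro s t p hlen hW _
    obtain ⟨hne, _⟩ := hW
    rw [Nat.le_zero, List.length_eq_zero_iff] at hlen
    exact absurd hlen hne
  | succ n ih =>
    intro s t p hlen hW hhit
    obtain ⟨hne, hhd, hlast, hch⟩ := hW
    by_cases hr : (G.negHops p).length ≤ h
    · refine ⟨[p], by simp, by simp [joinWalks], ?_, List.isChain_singleton _, ?_, ?_⟩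
      · intro w hw
        simp only [List.mem_singleton] at hw
        subst hw
        exact ⟨s, t, ⟨hne, hhd, hlast, hch⟩, hr⟩
      · exact ⟨p, by simp, hhd⟩
      · exact ⟨p, by simp, hlast⟩
    · push_neg at hr
      have h1 : 1 + h ≤ (G.negHops p).length := by omega
      obtain ⟨j, hj, hju⟩ := hhit 1 h1
      set k := 1 + j with hkdef
      have hkh : k ≤ h := by omega
      have hkr : k < (G.negHops p).length := by omega
      obtain ⟨pos, hpos, hget, htake⟩ :=
        filter_get_split (fun q : V × V => decide (G.len q.1 q.2 < 0)) (p.zip p.tail) k hkr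
      have hposk : k ≤ pos := by
        calc k = (((p.zip p.tail).take pos).filter
            (fun q : V × V => decide (G.len q.1 q.2 < 0))).length := htake.symm
        _ ≤ ((p.zip p.tail).take pos).length := List.length_filter_le _ _
        _ ≤ pos := by simp [List.length_take]
      have hpos1 : 1 ≤ pos := by omega
      have hplen : pos + 1 < p.length := by
        have hz : (p.zip p.tail).length = min p.length p.tail.length := List.length_zip ..
        rw [hz, List.length_tail] at hpos
        omega
      have hupos : pos < p.length := by omega
      have hup : p[pos] ∈ U₀ := by
        have h2 : (((p.zip p.tail).filter (fun q : V × V => decide (G.len q.1 q.2 < 0)))[k]'hkr).1 ∈ U₀ := hju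
        have h3 : (p.zip p.tail)[pos]'hpos = (p[pos], p.tail[pos]'(by rw [List.length_tail]; omega)) :=
          List.getElem_zip ..
        rw [← hget, h3] at h2
        exact h2
      set w1 := p.take (pos+1) with hw1def
      set w2 := p.drop pos with hw2def
      have hlw1 : w1.length = pos + 1 := by rw [hw1def, List.length_take]; omega
      have hlw2 : w2.length = p.length - pos := by rw [hw2def, List.length_drop]
      have hw1ne : w1 ≠ [] := by
        apply List.ne_nil_of_length_pos
        omega
      have hw2ne : w2 ≠ [] := by
        apply List.ne_nil_of_length_pos
        omega
      have hW1 : G.IsWalk s p[pos] w1 := by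
        refine ⟨hw1ne, ?_, ?_, ?_⟩
        · rw [hw1def, head?_take_succ]; exact hhd
        · exact getLast?_take_succ p pos hupos
        · exact hch.take _
      have hW2 : G.IsWalk p[pos] t w2 := by
        refine ⟨hw2ne, ?_, ?_, ?_⟩
        · rw [hw2def, List.head?_drop, List.getElem?_eq_getElem hupos]
        · rw [hw2def, getLast?_drop' p pos hupos]; exact hlast
        · exact hch.drop _
      have hnh1 : G.negHops w1 = ((p.zip p.tail).take pos).filter
          (fun q : V × V => decide (G.len q.1 q.2 < 0)) := by
        show (w1.zip w1.tail).filter _ = _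
        rw [hw1def, zipTail_take]
      have hnh2 : G.negHops w2 = (G.negHops p).drop k := by
        have hsplit : G.negHops p = G.negHops w1 ++ ((p.zip p.tail).drop pos).filter
            (fun q : V × V => decide (G.len q.1 q.2 < 0)) := by
          rw [hnh1, ← List.filter_append, List.take_append_drop]
          rfl
        have hnw2 : G.negHops w2 = ((p.zip p.tail).drop pos).filter
            (fun q : V × V => decide (G.len q.1 q.2 < 0)) := by
          show (w2.zip w2.tail).filter _ = _
          rw [hw2def, zipTail_drop]
        have hlnh1 : (G.negHops w1).length = k := by rw [hnh1]; exact htake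
        rw [hsplit, ← hlnh1, List.drop_left, hnw2]
      have hops1 : G.hops w1 = k := by
        show (G.negHops w1).length = k
        rw [hnh1]
        exact htake
      have hlen2 : w2.length ≤ n := by omega
      have hhit2 : ∀ i : ℕ, ∀ hi : i + h ≤ (G.negHops w2).length,
          ∃ j' : ℕ, ∃ hj' : j' < h, ((G.negHops w2).get ⟨i + j', by omega⟩).1 ∈ U₀ := by
        intro i hi
        have hlnh2 : (G.negHops w2).length = (G.negHops p).length - k := by
          rw [hnh2, List.length_drop]
        obtain ⟨j', hj', hju'⟩ := hhit (k + i) (by omega)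
        refine ⟨j', hj', ?_⟩
        simp only [List.get_eq_getElem] at hju' ⊢
        have hlt2 : i + j' < (G.negHops w2).length := by omega
        have hlt1 : k + i + j' < (G.negHops p).length := by omega
        have e1 : (G.negHops w2)[i + j']? = (G.negHops p)[k + (i + j')]? := by
          rw [hnh2, List.getElem?_drop]
        rw [show k + (i + j') = k + i + j' from by omega] at e1
        rw [List.getElem?_eq_getElem hlt2, List.getElem?_eq_getElem hlt1] at e1
        rw [Option.some.injEq] at e1
        rw [e1]
        exact hju'
      obtain ⟨ws', hne', hjoin', hall', hchain', hhd', hlast'⟩ :=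
        ih p[pos] t w2 hlen2 hW2 hhit2
      obtain ⟨w', ws'', rfl⟩ := List.exists_cons_of_ne_nil hne'
      refine ⟨w1 :: w' :: ws'', by simp, ?_, ?_, ?_, ?_, ?_⟩
      · show w1.dropLast ++ joinWalks (w' :: ws'') = p
        rw [hjoin']
        have hdl : w1.dropLast = p.take pos := by
          rw [List.dropLast_eq_take, hlw1, Nat.add_sub_cancel, hw1def, List.take_take,
            Nat.min_eq_left (Nat.le_succ pos)]
        rw [hdl, hw2def, List.take_append_drop]
      · intro w hw
        rcases List.mem_cons.mp hw with rfl | hw'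
        · exact ⟨s, p[pos], hW1, by omega⟩
        · exact hall' w hw'
      · rw [List.Chain', List.isChain_cons]
        constructor
        · intro b hb
          obtain ⟨w₀, hw₀, hw₀h⟩ := hhd'
          rw [Option.mem_def] at hb hw₀
          rw [hw₀] at hb
          rw [Option.some.injEq] at hb
          subst hb
          exact ⟨p[pos], hup, hW1.2.2.1, hw₀h⟩
        · exact hchain'
      · exact ⟨w1, by simp, hW1.2.1⟩
      · obtain ⟨wl, hwl, hwlt⟩ := hlast'
        refine ⟨wl, ?_, hwlt⟩
        rwa [List.getLast?_cons_cons]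


/-- Let `W` be a walk from `s` to `t` with hops `e₁,…,e_r` in order
of traversal, and suppose every window of `h` consecutive hops contains a hop whose
tail lies in `U₀`.  Then `W` decomposes into consecutive subwalks
`W₁ : s → u₁, …, W_{ℓ+1} : u_ℓ → t` with all intermediate endpoints `u_j ∈ U₀`,
each subwalk having at most `h` hops, whose concatenation is `W`. -/
theorem walk_decomposition {V : Type*} (G : WDigraph V) (h : ℕ) (hh : 1 ≤ h)
    (U₀ : Set V) (s t : V) (p : List V) (hW : G.IsWalk s t p)
    (hhit : ∀ i : ℕ, ∀ hi : i + h ≤ (G.negHops p).length,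
      ∃ j : ℕ, ∃ hj : j < h, ((G.negHops p).get ⟨i + j, by omega⟩).1 ∈ U₀) :
    ∃ ws : List (List V),
      ws ≠ [] ∧
      joinWalks ws = p ∧
      (∀ w ∈ ws, ∃ a b : V, G.IsWalk a b w ∧ G.hops w ≤ h) ∧
      ws.Chain' (fun w w' => ∃ u ∈ U₀, w.getLast? = some u ∧ w'.head? = some u) ∧
      (∃ w₀ ∈ ws.head?, w₀.head? = some s) ∧
      (∃ wl ∈ ws.getLast?, wl.getLast? = some t) := by
  exact walk_decomposition_aux G h hh U₀ p.length s t p le_rfl hW hhit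
end
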